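/- Under the hypotheses of the PASC theorem, with the joint maximum scores M_1,...,M_{n+1} almost surely distinct and ⌈(n+1)(1-α)⌉ ≤ n, the joint coverage satisfies P(∀ k, S_{k,n+1} ≤ q̂) ≤ 1 - α + 1/(n+1). -/

import Mathlib

open MeasureTheory

/-- The `r`-th smallest value (1-indexed) among `Z 0, ..., Z (n-1)`. -/
noncomputable def kthSmallest {n : ℕ} (Z : Fin n → ℝ) (r : ℕ) : ℝ :=
  (List.insertionSort (· ≤ ·) (List.ofFn Z)).getD (r - 1) 0

/-- The joint law of the `m` random vectors `i ↦ (S · i)` in `ℝ^K` is invariant under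
every permutation of the sample indices. -/
def ExchangeableVec {Ω : Type*} [MeasurableSpace Ω] (μ : Measure Ω) {K m : ℕ}
    (S : Fin K → Fin m → Ω → ℝ) : Prop :=
  ∀ σ : Equiv.Perm (Fin m),
    Measure.map (fun ω => fun i => fun k => S k (σ i) ω) μ =
      Measure.map (fun ω => fun i => fun k => S k i ω) μ


/-!
Ties among the joint maxima have probability zero, so the rank of `M_{n+1}` among
`M_1, …, M_{n+1}` is almost surely well defined and, by exchangeability, uniform on
`1, …, n + 1`. If every score of the test point is at most `q̂`, then `M_{n+1} ≤ q̂`, and since `q̂`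
is one of the calibration maxima, `M_{n+1} < q̂`, so fewer than `r` calibration maxima lie below
`M_{n+1}` and its rank is at most `r`. Hence the coverage is at most
`r / (n + 1) < 1 - α + 1 / (n + 1)`.
-/

open Finset
open scoped ENNReal

theorem List.Pairwise.countP_lt_getElem_le {α : Type*} [Preorder α] [DecidableLT α] {L : List α}
    (hL : L.Pairwise (· ≤ ·)) (i : ℕ) (hi : i < L.length) :
    L.countP (fun x => x < L[i]) ≤ i := by
  induction L generalizing i with
  | nil => simp at hi
  | cons a t ih =>
    rw [List.pairwise_cons] at hL
    cases i with
    | zero =>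
      simp only [List.getElem_cons_zero, nonpos_iff_eq_zero, List.countP_eq_zero,
        decide_eq_true_eq]
      intro x hx
      rcases List.mem_cons.mp hx with rfl | hx
      · exact lt_irrefl x
      · exact (hL.1 x hx).not_gt
    | succ k =>
      have := ih hL.2 k (by simpa using hi)
      rw [List.countP_cons]
      simp only [List.getElem_cons_succ]
      split <;> omega

theorem Fin.card_filter_univ_eq_countP_ofFn {α : Type*} {n : ℕ} (z : Fin n → α) (p : α → Prop)
    [DecidablePred p] : #{j | p (z j)} = (List.ofFn z).countP (fun x => p x) := by
  rw [card_def, filter_val, ← Multiset.countP_map, Fin.univ_val_map, Multiset.coe_countP]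

section kthSmallest

variable {n : ℕ} (z : Fin n → ℝ) {r : ℕ}

theorem kthSmallest_eq_getElem (hr : r - 1 < n) :
    kthSmallest z r = (List.insertionSort (· ≤ ·) (List.ofFn z))[r - 1]'(by simpa) :=
  List.getD_eq_getElem _ _ _

theorem kthSmallest_mem_range (hr : r - 1 < n) : kthSmallest z r ∈ Set.range z := by
  rw [kthSmallest_eq_getElem z hr, ← List.mem_ofFn']
  exact (List.perm_insertionSort _ _).subset (List.getElem_mem _)

theorem card_lt_kthSmallest_le (hr : r - 1 < n) : #{j | z j < kthSmallest z r} ≤ r - 1 := by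
  rw [Fin.card_filter_univ_eq_countP_ofFn z (· < kthSmallest z r),
    ← (List.perm_insertionSort (· ≤ ·) _).countP_eq, kthSmallest_eq_getElem z hr]
  exact (List.pairwise_insertionSort _ _).countP_lt_getElem_le _ _

end kthSmallest

section sampleRank

variable {ι α : Type*} [Fintype ι] [LinearOrder α]

def sampleRank (f : ι → α) (i : ι) : ℕ :=
  #{j | f j ≤ f i}

theorem sampleRank_comp_perm (f : ι → α) (σ : Equiv.Perm ι) (i : ι) :
    sampleRank (f ∘ σ) i = sampleRank f (σ i) :=
  card_equiv σ (by simp)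

theorem sampleRank_lt_sampleRank (f : ι → α) {i j : ι} (h : f i < f j) :
    sampleRank f i < sampleRank f j := by
  refine card_lt_card (ssubset_iff_of_subset ?_ |>.mpr ⟨j, ?_⟩)
  · intro k
    simpa using fun hk => hk.trans h.le
  · simpa using h

theorem sampleRank_injective {f : ι → α} (hf : Function.Injective f) :
    Function.Injective (sampleRank f) := by
  intro i j hij
  by_contra hne
  rcases (hf.ne hne).lt_or_gt with h | h
  · exact (sampleRank_lt_sampleRank f h).ne hij
  · exact (sampleRank_lt_sampleRank f h).ne' hij

theorem sampleRank_mem_Icc (f : ι → α) (i : ι) : sampleRank f i ∈ Icc 1 (Fintype.card ι) :=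
  mem_Icc.mpr ⟨card_pos.mpr ⟨i, by simp⟩, card_le_univ _⟩

/-- Without ties the ranks enumerate `1, …, card ι`. -/
theorem card_sampleRank_le {f : ι → α} (hf : Function.Injective f) {r : ℕ}
    (hr : r ≤ Fintype.card ι) : #{i | sampleRank f i ≤ r} = r := by
  have hinj := sampleRank_injective hf
  have himage : univ.image (sampleRank f) = Icc 1 (Fintype.card ι) :=
    eq_of_subset_of_card_le (by simpa [subset_iff] using sampleRank_mem_Icc f)
      (by simp [card_image_of_injective _ hinj])
  calc #{i | sampleRank f i ≤ r}
      = #((univ.image (sampleRank f)).filter (· ≤ r)) := by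
        rw [filter_image, card_image_of_injective _ hinj]
    _ = #(Icc 1 r) := by
        rw [himage]
        congr 1
        ext a
        simp only [mem_filter, mem_Icc]
        omega
    _ = r := by simp

theorem Fin.sampleRank_last {n : ℕ} (f : Fin (n + 1) → α) :
    sampleRank f (Fin.last n) = #{j : Fin n | f j.castSucc ≤ f (Fin.last n)} + 1 := by
  simp only [sampleRank, card_filter, Fin.sum_univ_castSucc, le_refl, if_true]

end sampleRank

theorem sampleRank_last_le_of_le_kthSmallest {n r : ℕ} {f : Fin (n + 1) → ℝ}
    (hf : Function.Injective f) (hr₀ : 0 < r) (hrn : r ≤ n)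
    (hle : f (Fin.last n) ≤ kthSmallest (fun j => f j.castSucc) r) :
    sampleRank f (Fin.last n) ≤ r := by
  have hr : r - 1 < n := by omega
  set q := kthSmallest (fun j => f j.castSucc) r
  obtain ⟨j₀, hj₀⟩ := kthSmallest_mem_range (fun j => f j.castSucc) hr
  have hlt : f (Fin.last n) < q :=
    hle.lt_of_ne fun h => (Fin.castSucc_lt_last j₀).ne (hf (hj₀.trans h.symm))
  have hcount : #{j : Fin n | f j.castSucc ≤ f (Fin.last n)} ≤ #{j : Fin n | f j.castSucc < q} :=
    card_le_card fun j => by simpa using fun hj => hj.trans_lt hlt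
  have hq : #{j : Fin n | f j.castSucc < q} ≤ r - 1 := card_lt_kthSmallest_le _ hr
  rw [Fin.sampleRank_last]
  omega

section Exchangeable

variable {Ω ι β : Type*} [MeasurableSpace Ω] {μ : Measure Ω}

def Exchangeable [MeasurableSpace β] (μ : Measure Ω) (X : ι → Ω → β) : Prop :=
  ∀ σ : Equiv.Perm ι, Measure.map (fun ω i => X (σ i) ω) μ = Measure.map (fun ω i => X i ω) μ

theorem ExchangeableVec.exchangeable {K m : ℕ} {S : Fin K → Fin m → Ω → ℝ}
    (h : ExchangeableVec μ S) : Exchangeable μ (fun i ω k => S k i ω) :=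
  h

variable [MeasurableSpace β] {X : ι → Ω → β}

theorem Exchangeable.comp {γ : Type*} [MeasurableSpace γ] (hX : Exchangeable μ X)
    (hXm : ∀ i, Measurable (X i)) {g : β → γ} (hg : Measurable g) :
    Exchangeable μ (fun i ω => g (X i ω)) := by
  intro σ
  change Measure.map ((fun (v : ι → β) i => g (v i)) ∘ fun ω i => X (σ i) ω) μ =
    Measure.map ((fun (v : ι → β) i => g (v i)) ∘ fun ω i => X i ω) μ
  have hg' : Measurable fun (v : ι → β) i => g (v i) :=
    measurable_pi_lambda _ fun i => hg.comp (measurable_pi_apply i)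
  rw [← Measure.map_map hg' (measurable_pi_lambda _ fun i => hXm (σ i)),
    ← Measure.map_map hg' (measurable_pi_lambda _ hXm), hX σ]

theorem Exchangeable.measure_perm_mem (hX : Exchangeable μ X) (hXm : ∀ i, Measurable (X i))
    (σ : Equiv.Perm ι) {A : Set (ι → β)} (hA : MeasurableSet A) :
    μ {ω | (fun i => X (σ i) ω) ∈ A} = μ {ω | (fun i => X i ω) ∈ A} := by
  change μ ((fun ω i => X (σ i) ω) ⁻¹' A) = μ ((fun ω i => X i ω) ⁻¹' A)
  rw [← Measure.map_apply (measurable_pi_lambda _ fun i => hXm (σ i)) hA, hX σ,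
    Measure.map_apply (measurable_pi_lambda _ hXm) hA]

end Exchangeable

open Classical in
theorem sum_measure_eq_of_ae_card_mem {Ω ι : Type*} [MeasurableSpace Ω] {μ : Measure Ω}
    [Fintype ι] {E : ι → Set Ω} (hE : ∀ i, MeasurableSet (E i)) {c : ℕ}
    (h : ∀ᵐ ω ∂μ, #{i | ω ∈ E i} = c) : ∑ i, μ (E i) = c * μ Set.univ := by
  calc ∑ i, μ (E i) = ∑ i, ∫⁻ ω, (E i).indicator 1 ω ∂μ := by
        simp only [lintegral_indicator_one (hE _)]
    _ = ∫⁻ ω, ∑ i, (E i).indicator 1 ω ∂μ :=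
        (lintegral_finsetSum _ fun i _ => measurable_one.indicator (hE i)).symm
    _ = ∫⁻ _, (c : ℝ≥0∞) ∂μ := by
        refine lintegral_congr_ae (h.mono fun ω hω => ?_)
        simp [Set.indicator_apply, ← hω]
    _ = c * μ Set.univ := lintegral_const _

theorem measurable_sampleRank {ι : Type*} [Fintype ι] (i : ι) :
    Measurable fun v : ι → ℝ => sampleRank v i := by
  simp only [sampleRank, card_filter]
  exact Finset.measurable_sum _ fun j _ => Measurable.ite
    (measurableSet_le (measurable_pi_apply j) (measurable_pi_apply i)) measurable_const
    measurable_const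

/-- By exchangeability the events `sampleRank · j ≤ r` all have the same probability, and almost
surely exactly `r` of them occur. -/
theorem Exchangeable.measure_sampleRank_le {Ω ι : Type*} [MeasurableSpace Ω] {μ : Measure Ω}
    [IsProbabilityMeasure μ] [Fintype ι] [DecidableEq ι] {X : ι → Ω → ℝ}
    (hX : Exchangeable μ X) (hXm : ∀ i, Measurable (X i))
    (hinj : ∀ᵐ ω ∂μ, Function.Injective fun i => X i ω) {r : ℕ} (hr : r ≤ Fintype.card ι)
    (i : ι) : μ {ω | sampleRank (fun j => X j ω) i ≤ r} = r / Fintype.card ι := by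
  set E : ι → Set Ω := fun j => {ω | sampleRank (fun l => X l ω) j ≤ r}
  have hE : ∀ j, MeasurableSet (E j) := fun j =>
    (measurable_sampleRank j).comp (measurable_pi_lambda _ hXm) measurableSet_Iic
  have hsame : ∀ j, μ (E j) = μ (E i) := fun j => by
    have hcomp (ω : Ω) :
        sampleRank (fun l => X (Equiv.swap i j l) ω) i = sampleRank (fun l => X l ω) j :=
      (sampleRank_comp_perm (fun l => X l ω) (Equiv.swap i j) i).trans
        (by rw [Equiv.swap_apply_left])
    have := hX.measure_perm_mem hXm (Equiv.swap i j) (A := {v | sampleRank v i ≤ r})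
      (measurable_sampleRank i measurableSet_Iic)
    simp only [Set.mem_ofPred_eq, hcomp] at this
    exact this
  have hsum : ∑ j, μ (E j) = r := by
    rw [sum_measure_eq_of_ae_card_mem hE
        (hinj.mono fun ω hω => by convert card_sampleRank_le hω hr using 3; rfl),
      measure_univ, mul_one]
  have : Nonempty ι := ⟨i⟩
  have hι : (Fintype.card ι : ℝ≥0∞) ≠ 0 := by simp
  rw [ENNReal.eq_div_iff hι (ENNReal.natCast_ne_top _), ← hsum,
    Finset.sum_congr rfl fun j _ => hsame j, sum_const, card_univ, nsmul_eq_mul]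

theorem pasc_near_tightness_general
    {Ω : Type*} [MeasurableSpace Ω] (μ : Measure Ω) [IsProbabilityMeasure μ]
    (n K : ℕ) (hK : 0 < K)
    (S : Fin K → Fin (n + 1) → Ω → ℝ) (hS : ∀ k i, Measurable (S k i))
    (hexch : ExchangeableVec μ S)
    (α : ℝ) (hα1 : α < 1)
    (M : Fin (n + 1) → Ω → ℝ)
    (hM : ∀ i ω, M i ω =
      Finset.univ.sup' (Finset.univ_nonempty_iff.mpr ⟨⟨0, hK⟩⟩) (fun k => S k i ω))
    (hdistinct : ∀ᵐ ω ∂μ, ∀ i j : Fin (n + 1), i ≠ j → M i ω ≠ M j ω)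
    (r : ℕ) (hr : r = ⌈((n : ℝ) + 1) * (1 - α)⌉₊) (hrn : r ≤ n)
    (qhat : Ω → ℝ)
    (hq : ∀ ω, qhat ω = kthSmallest (fun i : Fin n => M i.castSucc ω) r) :
    (μ {ω | ∀ k, S k (Fin.last n) ω ≤ qhat ω}).toReal ≤ 1 - α + 1 / (n + 1) := by
  have hr₀ : 0 < r := hr ▸ Nat.ceil_pos.mpr (mul_pos (by positivity) (by linarith))
  have hsup : Measurable fun v : Fin K → ℝ => univ.sup' (univ_nonempty_iff.mpr ⟨⟨0, hK⟩⟩) v := by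
    fun_prop
  have hMm (i : Fin (n + 1)) : Measurable (M i) := by
    rw [funext (hM i)]
    exact hsup.comp (measurable_pi_lambda _ fun k => hS k i)
  have hMexch : Exchangeable μ M := by
    rw [show M = _ from funext₂ hM]
    exact hexch.exchangeable.comp (fun i => measurable_pi_lambda _ fun k => hS k i) hsup
  have hinj : ∀ᵐ ω ∂μ, Function.Injective fun i => M i ω :=
    hdistinct.mono fun ω hω i j hij => by_contra fun hne => hω i j hne hij
  have hcover : {ω | ∀ k, S k (Fin.last n) ω ≤ qhat ω} ≤ᵐ[μ]
      {ω | sampleRank (fun i => M i ω) (Fin.last n) ≤ r} := by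
    filter_upwards [hinj] with ω hω hcov
    refine sampleRank_last_le_of_le_kthSmallest hω hr₀ hrn ?_
    rw [← hq, hM]
    exact sup'_le _ _ fun k _ => hcov k
  have hrank := hMexch.measure_sampleRank_le hMm hinj (r := r) (by simp; omega) (Fin.last n)
  calc (μ {ω | ∀ k, S k (Fin.last n) ω ≤ qhat ω}).toReal
      ≤ (μ {ω | sampleRank (fun i => M i ω) (Fin.last n) ≤ r}).toReal :=
        ENNReal.toReal_mono (measure_ne_top _ _) (measure_mono_ae hcover)
    _ = r / (n + 1) := by
        rw [hrank, ENNReal.toReal_div, Fintype.card_fin]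
        norm_cast
    _ ≤ 1 - α + 1 / (n + 1) := by
        have hceil : (r : ℝ) < (n + 1) * (1 - α) + 1 :=
          hr ▸ Nat.ceil_lt_add_one (mul_nonneg (by positivity) (by linarith))
        rw [div_le_iff₀ (by positivity)]
        field_simp
        linarith

theorem pasc_near_tightness
    {Ω : Type*} [MeasurableSpace Ω] (μ : Measure Ω) [IsProbabilityMeasure μ]
    (n K : ℕ) (hK : 0 < K)
    (S : Fin K → Fin (n + 1) → Ω → ℝ) (hS : ∀ k i, Measurable (S k i))
    (hexch : ExchangeableVec μ S)
    (α : ℝ) (hα0 : 0 < α) (hα1 : α < 1)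
    (M : Fin (n + 1) → Ω → ℝ)
    (hM : ∀ i ω, M i ω =
      Finset.univ.sup' (Finset.univ_nonempty_iff.mpr ⟨⟨0, hK⟩⟩) (fun k => S k i ω))
    (hdistinct : ∀ᵐ ω ∂μ, ∀ i j : Fin (n + 1), i ≠ j → M i ω ≠ M j ω)
    (r : ℕ) (hr : r = ⌈((n : ℝ) + 1) * (1 - α)⌉₊) (hrn : r ≤ n)
    (qhat : Ω → ℝ)
    (hq : ∀ ω, qhat ω = kthSmallest (fun i : Fin n => M i.castSucc ω) r) :
    (μ {ω | ∀ k, S k (Fin.last n) ω ≤ qhat ω}).toReal ≤ 1 - α + 1 / (n + 1) :=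
  pasc_near_tightness_general μ n K hK S hS hexch α hα1 M hM hdistinct r hr hrn qhat hq
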